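/- Let λ ⊆ ν and μ be partitions and let T be an edge-labeled tableau of shape ν/λ and content μ. If the row reading word w_r(T) is lattice, then the column reading word w_c(T) is lattice. -/

import Mathlib

/-!
Common definitions: partitions, edge-labeled tableaux (Thomas–Yong), reading
words, the polytope conditions (A)–(F), plus diagrams and (factorial) Schur
polynomials, following Adve–Robichaux–Yong,
"Vanishing of Littlewood-Richardson polynomials is in P".
-/

/-- A partition: a weakly decreasing, eventually-zero sequence of natural numbers.
Internally `toFun` is 0-indexed: `toFun (i-1)` is the `i`-th part `λ_i`. -/
structure Partition' where
  toFun : ℕ → ℕ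
  antitone' : ∀ ⦃i j : ℕ⦄, i ≤ j → toFun j ≤ toFun i
  eventually_zero' : ∃ N, ∀ i, N ≤ i → toFun i = 0

namespace Partition'

/-- The `i`-th part `λ_i` (1-indexed: `part 1` is the first part). -/
def part (p : Partition') (i : ℕ) : ℕ := p.toFun (i - 1)

/-- `ℓ(λ)`: the number of nonzero parts. -/
noncomputable def len (p : Partition') : ℕ := Set.ncard {i : ℕ | p.toFun i ≠ 0}

/-- `|λ| = Σ_i λ_i`. -/
noncomputable def size (p : Partition') : ℕ := ∑ᶠ i, p.toFun i

/-- The dilated partition `Nλ = (Nλ_1, Nλ_2, …)`. -/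
def smul (N : ℕ) (p : Partition') : Partition' where
  toFun i := N * p.toFun i
  antitone' _ _ h := Nat.mul_le_mul le_rfl (p.antitone' h)
  eventually_zero' := by
    obtain ⟨M, hM⟩ := p.eventually_zero'
    exact ⟨M, fun i hi => by rw [hM i hi, Nat.mul_zero]⟩

/-- `λ ⊆ ν`, i.e. `λ_i ≤ ν_i` for all `i`. -/
def Subset (lam nu : Partition') : Prop := ∀ i, lam.part i ≤ nu.part i

end Partition'

/-- `(i,j)` (1-indexed, matrix convention) is a box of the skew shape `ν/λ`,
i.e. `λ_i < j ≤ ν_i`. -/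
def IsBox (lam nu : Partition') (i j : ℕ) : Prop :=
  1 ≤ i ∧ lam.part i < j ∧ j ≤ nu.part i

instance (lam nu : Partition') (i j : ℕ) : Decidable (IsBox lam nu i j) :=
  inferInstanceAs (Decidable (_ ∧ _ ∧ _))

/-- `(i+1/2, j)` is a horizontal edge position of the skew shape `ν/λ`:
`1 ≤ j ≤ ν_i` and `j > λ_{i+1}`. -/
def IsEdge (lam nu : Partition') (i j : ℕ) : Prop :=
  1 ≤ i ∧ 1 ≤ j ∧ j ≤ nu.part i ∧ lam.part (i + 1) < j

/-- An edge-labeled tableau of shape `ν/λ` and content `μ` (Thomas–Yong).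
`box i j` is the label of box `(i,j)` (`0` outside the shape), and
`edge i j` is the finite set of labels on the edge `(i+1/2, j)`
(empty outside the shape). All labels are positive integers. -/
structure EdgeTableau (lam mu nu : Partition') where
  subset : Partition'.Subset lam nu
  box : ℕ → ℕ → ℕ
  edge : ℕ → ℕ → Finset ℕ
  box_pos : ∀ i j, IsBox lam nu i j → 1 ≤ box i j
  box_eq_zero : ∀ i j, ¬ IsBox lam nu i j → box i j = 0
  edge_pos : ∀ i j, ∀ e ∈ edge i j, 1 ≤ e
  edge_eq_empty : ∀ i j, ¬ IsEdge lam nu i j → edge i j = ∅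
  row_weak : ∀ i j, IsBox lam nu i j → IsBox lam nu i (j+1) → box i j ≤ box i (j+1)
  col_strict : ∀ i j, IsBox lam nu i j → IsBox lam nu (i+1) j → box i j < box (i+1) j
  edge_gt_box : ∀ i j, IsBox lam nu i j → ∀ e ∈ edge i j, box i j < e
  edge_lt_box : ∀ i j, IsBox lam nu (i+1) j → ∀ e ∈ edge i j, e < box (i+1) j
  not_too_high : ∀ i j, ∀ e ∈ edge i j, e ≤ i
  content : ∀ k, 1 ≤ k →
    Set.ncard {q : ℕ × ℕ | box q.1 q.2 = k} + Set.ncard {q : ℕ × ℕ | k ∈ edge q.1 q.2}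
      = mu.part k

namespace EdgeTableau

variable {lam mu nu : Partition'}

/-- The (one-letter or empty) word contributed by the box `(i,j)`. -/
def boxWord (T : EdgeTableau lam mu nu) (i j : ℕ) : List ℕ :=
  if IsBox lam nu i j then [T.box i j] else []

/-- The word contributed by the edge `(i+1/2, j)`, read in increasing order. -/
def edgeWord (T : EdgeTableau lam mu nu) (i j : ℕ) : List ℕ :=
  (T.edge i j).sort (· ≤ ·)

/-- The column reading word `w_c(T)`: columns right to left, each column top to
bottom, alternating the box label of row `i` with the edge set of row `i+1/2`. -/
noncomputable def wc (T : EdgeTableau lam mu nu) : List ℕ :=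
  ((List.range (nu.part 1)).reverse).flatMap fun j0 =>
    (List.range nu.len).flatMap fun i0 =>
      T.boxWord (i0+1) (j0+1) ++ T.edgeWord (i0+1) (j0+1)

/-- The row reading word `w_r(T)`: for `i = 1, 2, …`, the boxes of row `i`
right to left, then the edge sets of row `i+1/2` right to left. -/
noncomputable def wr (T : EdgeTableau lam mu nu) : List ℕ :=
  (List.range nu.len).flatMap fun i0 =>
    (((List.range (nu.part 1)).reverse).flatMap fun j0 => T.boxWord (i0+1) (j0+1)) ++
    (((List.range (nu.part 1)).reverse).flatMap fun j0 => T.edgeWord (i0+1) (j0+1))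

end EdgeTableau

/-- A word is lattice if, for every `k ≥ 1`, every prefix contains at least as
many letters `k` as letters `k+1`. -/
def IsLatticeWord (w : List ℕ) : Prop :=
  ∀ k, 1 ≤ k → ∀ t, (w.take t).count (k+1) ≤ (w.take t).count k

/-- `EdgeTab(λ,μ,ν)`: edge-labeled tableaux of shape `ν/λ` and content `μ`
whose column reading word is lattice. -/
def EdgeTab (lam mu nu : Partition') : Set (EdgeTableau lam mu nu) :=
  {T | IsLatticeWord T.wc}

/-! ### Positions and reading-order prefixes -/

/-- A (horizontal) position of a tableau: a box `(i,j)` or an edge `(i+1/2, j)`. -/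
inductive HPos
  | box (i j : ℕ)
  | edge (i j : ℕ)

namespace HPos

/-- Twice the (half-integer) row index: `2i` for a box in row `i`,
`2i+1` for an edge in row `i+1/2`. -/
def rowIdx : HPos → ℕ
  | .box i _ => 2 * i
  | .edge i _ => 2 * i + 1

/-- The column of a position. -/
def col : HPos → ℕ
  | .box _ j => j
  | .edge _ j => j

/-- `p` is weakly northeast of `q`: weakly above and weakly to the right. -/
def NorthEastOf (p q : HPos) : Prop := p.rowIdx ≤ q.rowIdx ∧ q.col ≤ p.col

/-- `p` is read no later than `q` in the column reading order (columns right to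
left, each column top to bottom); equivalently, every label at `p` is read by
the prefix `w_c|_q` of the column reading word ending after position `q`. -/
def colLE (p q : HPos) : Prop := q.col < p.col ∨ (p.col = q.col ∧ p.rowIdx ≤ q.rowIdx)

/-- `p` is read no later than `q` in the row reading order (rows top to bottom,
each row right to left); equivalently, every label at `p` is read by the
prefix `w_r|_q` of the row reading word ending after position `q`. -/
def rowLE (p q : HPos) : Prop := p.rowIdx < q.rowIdx ∨ (p.rowIdx = q.rowIdx ∧ q.col ≤ p.col)

end HPos

/-- `p` is a valid (box or edge) position of the skew shape `ν/λ`. -/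
def IsPos (lam nu : Partition') : HPos → Prop
  | .box i j => IsBox lam nu i j
  | .edge i j => IsEdge lam nu i j

/-- The tableau `T` carries the label `ℓ` at the position `p`. -/
def EdgeTableau.HasLabel {lam mu nu : Partition'} (T : EdgeTableau lam mu nu) :
    HPos → ℕ → Prop
  | .box i j, ℓ => IsBox lam nu i j ∧ T.box i j = ℓ
  | .edge i j, ℓ => ℓ ∈ T.edge i j

/-! ### The statistics `r_k^i(T)`, `r_k^{i+1/2}(T)` and conditions (A)–(F) -/

/-- `r_k^i(T)`: the number of box labels `k` in row `i` of `T`. -/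
noncomputable def EdgeTableau.rbox {lam mu nu : Partition'} (T : EdgeTableau lam mu nu)
    (k i : ℕ) : ℕ :=
  Set.ncard {j : ℕ | IsBox lam nu i j ∧ T.box i j = k}

/-- `r_k^{i+1/2}(T)`: the number of edge labels `k` on the edges `(i+1/2, j)` of `T`. -/
noncomputable def EdgeTableau.redge {lam mu nu : Partition'} (T : EdgeTableau lam mu nu)
    (k i : ℕ) : ℕ :=
  Set.ncard {j : ℕ | k ∈ T.edge i j}

open Finset in
/-- Conditions (A)–(F) of Adve–Robichaux–Yong for the triple `(λ,μ,ν)` on the real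
tuple `(r_k^i, r_k^{i+1/2})_{1 ≤ k ≤ ℓ(μ), 1 ≤ i ≤ ℓ(ν)}`, encoded as a pair of
functions `rb re : ℕ → ℕ → ℝ` (`rb k i = r_k^i`, `re k i = r_k^{i+1/2}`) that
vanish outside the index range (which also encodes the paper's conventions
`r_{ℓ(μ)+1}^i = r_{ℓ(μ)+1}^{i+1/2} = 0` and `r_k^{ℓ(ν)+1} = 0`).
Membership in the polytope `P(λ,μ,ν)` is exactly this predicate. -/
def SatisfiesAF (lam mu nu : Partition') (rb re : ℕ → ℕ → ℝ) : Prop :=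
  -- the tuple is indexed by `1 ≤ k ≤ ℓ(μ)`, `1 ≤ i ≤ ℓ(ν)`; it vanishes elsewhere
  (∀ k i, ¬(1 ≤ k ∧ k ≤ mu.len ∧ 1 ≤ i ∧ i ≤ nu.len) → rb k i = 0 ∧ re k i = 0) ∧
  -- (A) nonnegativity
  (∀ k i, 0 ≤ rb k i ∧ 0 ≤ re k i) ∧
  -- (B) shape constraints
  (∀ i, 1 ≤ i → (lam.part i : ℝ) + ∑ k ∈ Icc 1 mu.len, rb k i = (nu.part i : ℝ)) ∧
  -- (C) content constraints
  (∀ k, 1 ≤ k → ∑ i ∈ Icc 1 nu.len, (rb k i + re k i) = (mu.part k : ℝ)) ∧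
  -- (D) gap constraints
  (∀ k i, 1 ≤ k → k ≤ mu.len → 1 ≤ i → i ≤ nu.len →
    re k i ≤ ((lam.part i : ℝ) + ∑ k' ∈ Ico 1 k, rb k' i)
      - ((lam.part (i+1) : ℝ) + ∑ k' ∈ Icc 1 k, rb k' (i+1))) ∧
  -- (E) no label is too high
  (∀ k i, i < k → rb k i = 0 ∧ re k i = 0) ∧
  -- (F) reverse lattice word constraints
  (∀ k i, 1 ≤ k → k ≤ mu.len → 1 ≤ i → i ≤ nu.len →
    rb (k+1) i + ∑ i' ∈ Ico 1 i, (rb (k+1) i' + re (k+1) i')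
      ≤ ∑ i' ∈ Ico 1 i, (rb k i' + re k i'))

/-! ### Plus diagrams and (factorial) Schur polynomials -/

/-- The initial diagram of `λ` in the `n`-row grid: a `+` in each position
`(i,j)` with `1 ≤ i ≤ n`, `1 ≤ j ≤ λ_i`. -/
def initialDiagram (n : ℕ) (lam : Partition') : Finset (ℕ × ℕ) :=
  (Finset.Icc 1 n ×ˢ Finset.Icc 1 (lam.part 1)).filter fun q => q.2 ≤ lam.part q.1

/-- A local move in the `n × m` grid: a `+` at `(i,j)` moves to `(i+1,j+1)`,
provided `(i+1,j+1)` lies in the grid and `(i,j+1)`, `(i+1,j)`, `(i+1,j+1)`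
carry no `+`. -/
def IsLocalMove (n m : ℕ) (P Q : Finset (ℕ × ℕ)) : Prop :=
  ∃ i j, (i, j) ∈ P ∧ i + 1 ≤ n ∧ j + 1 ≤ m ∧
    (i, j+1) ∉ P ∧ (i+1, j) ∉ P ∧ (i+1, j+1) ∉ P ∧
    Q = insert (i+1, j+1) (P.erase (i, j))

/-- `Plus(λ)`: all configurations obtainable from the initial diagram of `λ`
in the `n × m` grid by finite sequences of local moves. -/
def PlusSet (n m : ℕ) (lam : Partition') : Set (Finset (ℕ × ℕ)) :=
  {P | Relation.ReflTransGen (IsLocalMove n m) (initialDiagram n lam) P}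

open MvPolynomial in
/-- `wt_{x,y}(P) = ∏_{(i,j) ∈ P} (x_i - y_j)`, in `ℤ[x_1, x_2, …, y_1, y_2, …]`
(the variable `Sum.inl i` is `x_i`, and `Sum.inr j` is `y_j`). -/
noncomputable def wtxy (P : Finset (ℕ × ℕ)) : MvPolynomial (ℕ ⊕ ℕ) ℤ :=
  ∏ q ∈ P, (X (Sum.inl q.1) - X (Sum.inr q.2))

open MvPolynomial in
/-- `wt_x(P) = ∏_i x_i^{a_i(P)}`, where `a_i(P)` is the number of `+`'s in row `i`. -/
noncomputable def wtx (P : Finset (ℕ × ℕ)) : MvPolynomial (ℕ ⊕ ℕ) ℤ :=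
  ∏ q ∈ P, X (Sum.inl q.1)

/-- The factorial Schur polynomial `s_λ(X;Y) = Σ_{P ∈ Plus(λ)} wt_{x,y}(P)`
(computed in the `n × m` grid). -/
noncomputable def factorialSchur (n m : ℕ) (lam : Partition') : MvPolynomial (ℕ ⊕ ℕ) ℤ :=
  ∑ᶠ P ∈ PlusSet n m lam, wtxy P

/-- The Schur polynomial `s_λ(X) = Σ_{P ∈ Plus(λ)} wt_x(P)`
(computed in the `n × m` grid). -/
noncomputable def schurPoly (n m : ℕ) (lam : Partition') : MvPolynomial (ℕ ⊕ ℕ) ℤ :=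
  ∑ᶠ P ∈ PlusSet n m lam, wtx P

open MvPolynomial in
/-- The substitution `y_j = 0` for all `j` (keeping the `x`-variables). -/
noncomputable def setYtoZero : MvPolynomial (ℕ ⊕ ℕ) ℤ →+* MvPolynomial (ℕ ⊕ ℕ) ℤ :=
  (aeval (Sum.elim (fun i => (X (Sum.inl i) : MvPolynomial (ℕ ⊕ ℕ) ℤ)) fun _ => 0)).toRingHom

open MvPolynomial in
/-- Interpret a polynomial in `ℤ[y_1, y_2, …]` inside `ℤ[x_1, …, y_1, …]`. -/
noncomputable def yPoly (p : MvPolynomial ℕ ℤ) : MvPolynomial (ℕ ⊕ ℕ) ℤ :=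
  rename Sum.inr p


section AUX

namespace Partition'

theorem part_antitone (p : Partition') {i j : ℕ} (h : i ≤ j) : p.part j ≤ p.part i :=
  p.antitone' (Nat.sub_le_sub_right h 1)

theorem toFun_eq_zero_of_len_le (p : Partition') {i : ℕ} (h : p.len ≤ i) : p.toFun i = 0 := by
  by_contra hne
  obtain ⟨N, hN⟩ := p.eventually_zero'
  have hfin : {t : ℕ | p.toFun t ≠ 0}.Finite := by
    apply Set.Finite.subset (Set.finite_Iio N)
    intro t ht
    by_contra hlt
    exact ht (hN t (not_lt.mp hlt))
  have hsub : Set.Iic i ⊆ {t : ℕ | p.toFun t ≠ 0} := by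
    intro t ht
    intro h0
    exact hne (Nat.le_zero.mp (h0 ▸ p.antitone' ht))
  have hle := Set.ncard_le_ncard hsub hfin
  rw [show Set.Iic i = ↑(Finset.Iic i) by simp, Set.ncard_coe_finset, Nat.card_Iic] at hle
  have : p.len = Set.ncard {t : ℕ | p.toFun t ≠ 0} := rfl
  omega

theorem part_eq_zero_of_len_lt (p : Partition') {r : ℕ} (h : p.len < r) : p.part r = 0 :=
  p.toFun_eq_zero_of_len_le (show p.len ≤ r - 1 by omega)

end Partition'

namespace EdgeTableau

variable {lam mu nu : Partition'} (T : EdgeTableau lam mu nu)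

/-! ### Shape lemmas -/

theorem isBox_bounds {r c : ℕ} (h : IsBox lam nu r c) :
    1 ≤ r ∧ r ≤ nu.len ∧ 1 ≤ c ∧ c ≤ nu.part 1 := by
  obtain ⟨hr, hl, hn⟩ := h
  have hc1 : 1 ≤ c := by omega
  have hrL : r ≤ nu.len := by
    by_contra hgt
    rw [nu.part_eq_zero_of_len_lt (by omega)] at hn; omega
  exact ⟨hr, hrL, hc1, le_trans hn (nu.part_antitone hr)⟩

theorem isEdge_bounds {i c : ℕ} (h : IsEdge lam nu i c) :
    1 ≤ i ∧ i ≤ nu.len ∧ 1 ≤ c ∧ c ≤ nu.part 1 := by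
  obtain ⟨hi, hc, hn, hl⟩ := h
  have hiL : i ≤ nu.len := by
    by_contra hgt
    rw [nu.part_eq_zero_of_len_lt (by omega)] at hn; omega
  exact ⟨hi, hiL, hc, le_trans hn (nu.part_antitone hi)⟩

theorem isEdge_of_mem {i c x : ℕ} (h : x ∈ T.edge i c) : IsEdge lam nu i c := by
  by_contra hn
  rw [T.edge_eq_empty i c hn] at h
  exact absurd h (Finset.notMem_empty x)

/-- boxes between two boxes in a column exist -/
theorem isBox_between_col {r s r' c : ℕ} (h1 : IsBox lam nu r c) (h2 : IsBox lam nu r' c)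
    (hrs : r ≤ s) (hsr : s ≤ r') : IsBox lam nu s c := by
  obtain ⟨hr, hl, _⟩ := h1
  obtain ⟨_, _, hn⟩ := h2
  exact ⟨by omega, lt_of_le_of_lt (lam.part_antitone hrs) hl,
    le_trans hn (nu.part_antitone hsr)⟩

theorem isBox_between_row {r c c' d : ℕ} (h1 : IsBox lam nu r c) (h2 : IsBox lam nu r c')
    (hcd : c ≤ d) (hdc : d ≤ c') : IsBox lam nu r d := by
  obtain ⟨hr, hl, _⟩ := h1
  obtain ⟨_, _, hn⟩ := h2
  exact ⟨hr, by omega, by omega⟩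

/-- column chain: strict growth down a column -/
theorem chain_col {r r' c : ℕ} (hrr : r ≤ r') (h1 : IsBox lam nu r c) (h2 : IsBox lam nu r' c) :
    T.box r c + (r' - r) ≤ T.box r' c := by
  induction r', hrr using Nat.le_induction with
  | base => simp
  | succ s hs ih =>
    have hsb : IsBox lam nu s c := isBox_between_col h1 h2 hs (by omega)
    have := T.col_strict s c hsb h2
    have := ih hsb
    omega

theorem chain_row {r c c' : ℕ} (hcc : c ≤ c') (h1 : IsBox lam nu r c) (h2 : IsBox lam nu r c') :
    T.box r c ≤ T.box r c' := by
  induction c', hcc using Nat.le_induction with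
  | base => simp
  | succ s hs ih =>
    have hsb : IsBox lam nu r s := isBox_between_row h1 h2 hs (by omega)
    have := T.row_weak r s hsb h2
    have := ih hsb
    omega

/-! ### Column order lemmas -/

theorem co_bb {r r' c : ℕ} (h1 : IsBox lam nu r c) (h2 : IsBox lam nu r' c) (hlt : r < r') :
    T.box r c < T.box r' c := by
  have := T.chain_col (le_of_lt hlt) h1 h2
  omega

theorem co_be {r r' c x : ℕ} (h1 : IsBox lam nu r c) (h2 : IsEdge lam nu r' c)
    (hx : x ∈ T.edge r' c) (hle : r ≤ r') : T.box r c < x := by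
  obtain ⟨ha1, ha2, ha3⟩ := h1
  obtain ⟨hb1, hb2, hb3, hb4⟩ := h2
  have hmono := lam.part_antitone hle
  have hb' : IsBox lam nu r' c := ⟨by omega, by omega, hb3⟩
  have hch := T.chain_col hle ⟨ha1, ha2, ha3⟩ hb'
  have := T.edge_gt_box r' c hb' x hx
  omega

theorem co_eb {i r' c x : ℕ} (h1 : IsEdge lam nu i c) (hx : x ∈ T.edge i c)
    (h2 : IsBox lam nu r' c) (hlt : i < r') : x < T.box r' c := by
  obtain ⟨ha1, ha2, ha3, ha4⟩ := h1
  obtain ⟨hb1, hb2, hb3⟩ := h2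
  have hmono := nu.part_antitone (show i + 1 ≤ r' by omega)
  have hb1' : IsBox lam nu (i+1) c := ⟨by omega, ha4, by omega⟩
  have := T.edge_lt_box i c hb1' x hx
  have := T.chain_col (show i + 1 ≤ r' by omega) hb1' ⟨hb1, hb2, hb3⟩
  omega

theorem co_ee {i i' c x y : ℕ} (h1 : IsEdge lam nu i c) (hx : x ∈ T.edge i c)
    (h2 : IsEdge lam nu i' c) (hy : y ∈ T.edge i' c) (hlt : i < i') : x < y := by
  obtain ⟨ha1, ha2, ha3, ha4⟩ := h1
  obtain ⟨hb1, hb2, hb3, hb4⟩ := h2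
  have hmono := lam.part_antitone (show i + 1 ≤ i' by omega)
  have hb' : IsBox lam nu i' c := ⟨by omega, by omega, hb3⟩
  have := T.co_eb ⟨ha1, ha2, ha3, ha4⟩ hx hb' hlt
  have := T.edge_gt_box i' c hb' y hy
  omega

/-! ### The D-lemmas (forcing lemmas) -/

/-- box `k` strictly above, weakly left of box `k+1`. -/
theorem D1 {k rx cx r' c' : ℕ} (hX : IsBox lam nu rx cx) (hXv : T.box rx cx = k)
    (hY : IsBox lam nu r' c') (hYv : T.box r' c' = k + 1) (hrow : rx < r') (hcol : cx ≤ c') :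
    ∀ c, cx ≤ c → c ≤ c' → IsBox lam nu (r' - 1) c ∧ T.box (r' - 1) c = k := by
  obtain ⟨ha1, ha2, ha3⟩ := hX
  obtain ⟨hb1, hb2, hb3⟩ := hY
  have hmono := nu.part_antitone (show rx ≤ r' by omega)
  have hXc' : IsBox lam nu rx c' := ⟨ha1, by omega, by omega⟩
  have h1 : k ≤ T.box rx c' := hXv ▸ T.chain_row hcol ⟨ha1, ha2, ha3⟩ hXc'
  have h2 := T.chain_col (le_of_lt hrow) hXc' ⟨hb1, hb2, hb3⟩
  rw [hYv] at h2
  have hr : r' = rx + 1 := by omega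
  subst hr
  have hbv : T.box rx c' = k := by omega
  intro c hc1 hc2
  have hbc : IsBox lam nu rx c := isBox_between_row ⟨ha1, ha2, ha3⟩ hXc' hc1 hc2
  have := T.chain_row hc1 ⟨ha1, ha2, ha3⟩ hbc
  have := T.chain_row hc2 hbc hXc'
  rw [show rx + 1 - 1 = rx by omega]
  exact ⟨hbc, by omega⟩

/-- box `k` weakly above edge row carrying `k+1`: forced row of `k`s. -/
theorem D2 {k rx cx i' c' : ℕ} (hX : IsBox lam nu rx cx) (hXv : T.box rx cx = k)
    (hY : IsEdge lam nu i' c') (hYv : (k+1) ∈ T.edge i' c') (hrow : rx ≤ i') (hcol : cx ≤ c') :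
    ∀ c, cx ≤ c → c ≤ c' → IsBox lam nu i' c ∧ T.box i' c = k := by
  obtain ⟨ha1, ha2, ha3⟩ := hX
  obtain ⟨hb1, hb2, hb3, hb4⟩ := hY
  have hmono := nu.part_antitone hrow
  have hmono2 := lam.part_antitone hrow
  have hXc' : IsBox lam nu rx c' := ⟨ha1, by omega, by omega⟩
  have hYb : IsBox lam nu i' c' := ⟨by omega, by omega, hb3⟩
  have h1 : k ≤ T.box rx c' := hXv ▸ T.chain_row hcol ⟨ha1, ha2, ha3⟩ hXc'
  have h2 := T.chain_col hrow hXc' hYb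
  have h3 := T.edge_gt_box i' c' hYb (k+1) hYv
  have hr : rx = i' := by omega
  subst hr
  have hbv : T.box rx c' = k := by omega
  intro c hc1 hc2
  have hbc : IsBox lam nu rx c := isBox_between_row ⟨ha1, ha2, ha3⟩ hXc' hc1 hc2
  have := T.chain_row hc1 ⟨ha1, ha2, ha3⟩ hbc
  have := T.chain_row hc2 hbc hXc'
  exact ⟨hbc, by omega⟩

/-- edge `k` strictly above edge row carrying `k+1`: impossible. -/
theorem D3 {k ix cx i' c' : ℕ} (hX : IsEdge lam nu ix cx) (hXv : k ∈ T.edge ix cx)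
    (hY : IsEdge lam nu i' c') (hYv : (k+1) ∈ T.edge i' c') (hrow : ix < i') (hcol : cx ≤ c') :
    False := by
  obtain ⟨ha1, ha2, ha3, ha4⟩ := hX
  obtain ⟨hb1, hb2, hb3, hb4⟩ := hY
  have hmono := nu.part_antitone (show ix + 1 ≤ i' by omega)
  have hmono2 := lam.part_antitone (show ix + 1 ≤ i' by omega)
  have hbxa : IsBox lam nu (ix+1) cx := ⟨by omega, ha4, by omega⟩
  have hbxb : IsBox lam nu (ix+1) c' := ⟨by omega, by omega, by omega⟩
  have hYb : IsBox lam nu i' c' := ⟨by omega, by omega, hb3⟩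
  have h1 := T.edge_lt_box ix cx hbxa k hXv
  have h2 := T.chain_row hcol hbxa hbxb
  have h3 := T.chain_col (show ix + 1 ≤ i' by omega) hbxb hYb
  have h4 := T.edge_gt_box i' c' hYb (k+1) hYv
  omega

/-- edge `k` strictly above box `k+1`: the box is just below the edge row,
and its row is full of `k+1`s between the two columns. -/
theorem D4 {k ix cx r' c' : ℕ} (hX : IsEdge lam nu ix cx) (hXv : k ∈ T.edge ix cx)
    (hY : IsBox lam nu r' c') (hYv : T.box r' c' = k + 1) (hrow : ix < r') (hcol : cx ≤ c') :
    r' = ix + 1 ∧ ∀ c, cx ≤ c → c ≤ c' → IsBox lam nu r' c ∧ T.box r' c = k + 1 := by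
  obtain ⟨ha1, ha2, ha3, ha4⟩ := hX
  obtain ⟨hb1, hb2, hb3⟩ := hY
  have hmono := nu.part_antitone (show ix + 1 ≤ r' by omega)
  have hbxa : IsBox lam nu (ix+1) cx := ⟨by omega, ha4, by omega⟩
  have hbxb : IsBox lam nu (ix+1) c' := ⟨by omega, by omega, by omega⟩
  have h1 := T.edge_lt_box ix cx hbxa k hXv
  have h2 := T.chain_row hcol hbxa hbxb
  have h3 := T.chain_col (show ix + 1 ≤ r' by omega) hbxb ⟨hb1, hb2, hb3⟩
  rw [hYv] at h3
  have hr : r' = ix + 1 := by omega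
  subst hr
  refine ⟨rfl, fun c hc1 hc2 => ?_⟩
  have hbc : IsBox lam nu (ix+1) c := isBox_between_row hbxa hbxb hc1 hc2
  have := T.chain_row hc1 hbxa hbc
  have := T.chain_row hc2 hbc hbxb
  exact ⟨hbc, by omega⟩

/-! ### Counting functions -/

/-- `1` if box `(r,c)` carries label `m`. -/
def cB (m r c : ℕ) : ℕ := if IsBox lam nu r c ∧ T.box r c = m then 1 else 0

/-- `1` if edge `(r+1/2,c)` carries label `m`. -/
def cE (m r c : ℕ) : ℕ := if m ∈ T.edge r c then 1 else 0

theorem cB_le_one (m r c : ℕ) : T.cB m r c ≤ 1 := by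
  unfold cB; split <;> omega

theorem cE_le_one (m r c : ℕ) : T.cE m r c ≤ 1 := by
  unfold cE; split <;> omega

theorem cB_pos_iff {m r c : ℕ} : 0 < T.cB m r c ↔ IsBox lam nu r c ∧ T.box r c = m := by
  unfold cB; split <;> simp_all

theorem cE_pos_iff {m r c : ℕ} : 0 < T.cE m r c ↔ m ∈ T.edge r c := by
  unfold cE; split <;> simp_all

theorem cB_eq_one {m r c : ℕ} (h1 : IsBox lam nu r c) (h2 : T.box r c = m) :
    T.cB m r c = 1 := by unfold cB; rw [if_pos ⟨h1, h2⟩]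

theorem cE_eq_one {m r c : ℕ} (h : m ∈ T.edge r c) : T.cE m r c = 1 := by
  unfold cE; rw [if_pos h]

/-- number of labels `m` in column `c`. -/
noncomputable def colCnt (m c : ℕ) : ℕ :=
  ∑ r ∈ Finset.Ico 1 (nu.len + 1), (T.cB m r c + T.cE m r c)

/-- number of labels `m` in columns `≥ j`. -/
noncomputable def V (m j : ℕ) : ℕ := ∑ c ∈ Finset.Ico j (nu.part 1 + 1), T.colCnt m c

/-- number of box labels `m` in row `r`. -/
def rB (m r : ℕ) : ℕ := ∑ c ∈ Finset.Ico 1 (nu.part 1 + 1), T.cB m r c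

/-- number of edge labels `m` in edge row `r+1/2`. -/
def rE (m r : ℕ) : ℕ := ∑ c ∈ Finset.Ico 1 (nu.part 1 + 1), T.cE m r c

/-- number of box labels `m` in row `r`, columns `≥ c₀`. -/
def BRight (m r c₀ : ℕ) : ℕ := ∑ c ∈ Finset.Ico c₀ (nu.part 1 + 1), T.cB m r c

/-- number of edge labels `m` in edge row `r+1/2`, columns `≥ c₀`. -/
def ERight (m r c₀ : ℕ) : ℕ := ∑ c ∈ Finset.Ico c₀ (nu.part 1 + 1), T.cE m r c

/-- number of labels `m` in rows strictly before row `J` (boxes and edges). -/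
def RowsTo (m J : ℕ) : ℕ := ∑ r ∈ Finset.Ico 1 J, (T.rB m r + T.rE m r)

/-! ### Word components -/

/-- the column word of column `c`. -/
noncomputable def colW (c : ℕ) : List ℕ :=
  (List.range nu.len).flatMap fun i0 => T.boxWord (i0+1) c ++ T.edgeWord (i0+1) c

/-- the box part of the row word of row `r` (right to left). -/
def rowB (r : ℕ) : List ℕ :=
  ((List.range (nu.part 1)).reverse).flatMap fun j0 => T.boxWord r (j0+1)

/-- the edge part of the row word of row `r` (right to left). -/
def rowE (r : ℕ) : List ℕ :=
  ((List.range (nu.part 1)).reverse).flatMap fun j0 => T.edgeWord r (j0+1)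

theorem wr_eq : T.wr = (List.range nu.len).flatMap fun i0 => T.rowB (i0+1) ++ T.rowE (i0+1) :=
  rfl

theorem wc_eq : T.wc = ((List.range (nu.part 1)).reverse).flatMap fun j0 => T.colW (j0+1) :=
  rfl

/-! ### Generic list lemmas -/

theorem list_sum_range (f : ℕ → ℕ) (n : ℕ) :
    ((List.range n).map f).sum = ∑ i ∈ Finset.range n, f i := by
  induction n with
  | zero => simp
  | succ n ih =>
    rw [List.range_succ, List.map_append, List.sum_append, Finset.sum_range_succ, ih]
    simp

theorem count_flatMap (f : ℕ → List ℕ) (l : List ℕ) (m : ℕ) :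
    (l.flatMap f).count m = (l.map fun x => (f x).count m).sum := by
  induction l with
  | nil => simp
  | cons a l ih => rw [List.flatMap_cons, List.count_append, List.map_cons, List.sum_cons, ih]

theorem count_flatMap_rev (f : ℕ → List ℕ) (l : List ℕ) (m : ℕ) :
    (l.reverse.flatMap f).count m = (l.map fun x => (f x).count m).sum := by
  rw [count_flatMap, List.map_reverse, List.sum_reverse]

theorem count_flatMap_range (f : ℕ → List ℕ) (n m : ℕ) :
    ((List.range n).flatMap f).count m = ∑ i ∈ Finset.range n, (f i).count m := by
  rw [count_flatMap, list_sum_range]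

theorem count_flatMap_range_rev (f : ℕ → List ℕ) (n m : ℕ) :
    ((List.range n).reverse.flatMap f).count m = ∑ i ∈ Finset.range n, (f i).count m := by
  rw [count_flatMap_rev, list_sum_range]

theorem count_flatMap_revmap (f : ℕ → List ℕ) (b d m : ℕ) :
    ((((List.range d).map (fun x => b + x)).reverse).flatMap f).count m
      = ∑ i ∈ Finset.range d, (f (b + i)).count m := by
  rw [count_flatMap_rev, List.map_map, list_sum_range]
  rfl

/-- split a flatMap over a range into the part before `I`, the block `I`, and a rest. -/
theorem flatMap_mid_split (f : ℕ → List ℕ) {I n : ℕ} (h : I < n) :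
    ∃ Z, (List.range n).flatMap f = (List.range I).flatMap f ++ (f I ++ Z) := by
  induction n with
  | zero => omega
  | succ n ih =>
    rcases Nat.lt_or_ge I n with h' | h'
    · obtain ⟨Z, hZ⟩ := ih h'
      refine ⟨Z ++ f n, ?_⟩
      rw [List.range_succ, List.flatMap_append, hZ]
      simp [List.append_assoc]
    · have : I = n := by omega
      subst this
      refine ⟨[], ?_⟩
      rw [List.range_succ, List.flatMap_append]
      simp

/-- split a reversed-range flatMap at column threshold `c`. -/
theorem rev_flatMap_split (f : ℕ → List ℕ) {c n : ℕ} (h : c ≤ n) :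
    (List.range n).reverse.flatMap f
      = (((List.range (n - c)).map (fun x => c + x)).reverse).flatMap f
        ++ (List.range c).reverse.flatMap f := by
  conv_lhs => rw [show n = c + (n - c) by omega, List.range_add]
  rw [List.reverse_append, List.flatMap_append]

theorem take_prefix₂ (a b r : List ℕ) :
    (a ++ (b ++ r)).take (a.length + b.length) = a ++ b := by
  rw [List.take_append, List.take_of_length_le (by omega),
    Nat.add_sub_cancel_left, List.take_append,
    List.take_of_length_le (le_refl _), Nat.sub_self, List.take_zero, List.append_nil]

/-! ### Count bridges -/

theorem count_boxWord (m r c : ℕ) : (T.boxWord r c).count m = T.cB m r c := by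
  unfold boxWord cB
  by_cases h : IsBox lam nu r c
  · rw [if_pos h]
    by_cases hv : T.box r c = m
    · rw [if_pos ⟨h, hv⟩, hv]; simp
    · rw [if_neg (by tauto)]
      simp [List.count_singleton, hv]
  · rw [if_neg h, if_neg (by tauto)]
    simp

theorem count_edgeWord (m r c : ℕ) : (T.edgeWord r c).count m = T.cE m r c := by
  unfold edgeWord cE
  by_cases h : m ∈ T.edge r c
  · rw [if_pos h]
    exact List.count_eq_one_of_mem (Finset.sort_nodup _ _) ((Finset.mem_sort _).mpr h)
  · rw [if_neg h]
    exact List.count_eq_zero_of_not_mem (fun hc => h ((Finset.mem_sort _).mp hc))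

theorem count_rowB (m r : ℕ) : (T.rowB r).count m = T.rB m r := by
  unfold rowB rB
  rw [count_flatMap_range_rev, Finset.sum_Ico_eq_sum_range]
  refine Finset.sum_congr (by norm_num) fun i _ => ?_
  rw [count_boxWord]
  congr 1
  omega

theorem count_rowE (m r : ℕ) : (T.rowE r).count m = T.rE m r := by
  unfold rowE rE
  rw [count_flatMap_range_rev, Finset.sum_Ico_eq_sum_range]
  refine Finset.sum_congr (by norm_num) fun i _ => ?_
  rw [count_edgeWord]
  congr 1
  omega

theorem count_colW (m c : ℕ) : (T.colW c).count m = T.colCnt m c := by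
  unfold colW colCnt
  rw [count_flatMap_range, Finset.sum_Ico_eq_sum_range]
  refine Finset.sum_congr (by norm_num) fun i _ => ?_
  rw [List.count_append, count_boxWord, count_edgeWord]
  congr 2 <;> omega

theorem count_pre (m I : ℕ) :
    (((List.range I).flatMap fun i0 => T.rowB (i0+1) ++ T.rowE (i0+1)).count m)
      = T.RowsTo m (I+1) := by
  unfold RowsTo
  rw [count_flatMap_range, Finset.sum_Ico_eq_sum_range]
  refine Finset.sum_congr (by norm_num) fun i _ => ?_
  rw [List.count_append, count_rowB, count_rowE]
  congr 2 <;> omega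

/-! ### Cut inequalities from the row lattice word -/

theorem count_upperBoxes (m r c₀ : ℕ) (hc1 : 1 ≤ c₀) :
    (((((List.range (nu.part 1 - (c₀ - 1))).map (fun x => (c₀ - 1) + x)).reverse).flatMap
        fun j0 => T.boxWord r (j0+1)).count m) = T.BRight m r c₀ := by
  unfold BRight
  rw [count_flatMap_revmap, Finset.sum_Ico_eq_sum_range,
    show nu.part 1 + 1 - c₀ = nu.part 1 - (c₀ - 1) by omega]
  refine Finset.sum_congr rfl fun i _ => ?_
  rw [count_boxWord]
  congr 1
  omega

theorem count_upperEdges (m r c₀ : ℕ) (hc1 : 1 ≤ c₀) :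
    (((((List.range (nu.part 1 - (c₀ - 1))).map (fun x => (c₀ - 1) + x)).reverse).flatMap
        fun j0 => T.edgeWord r (j0+1)).count m) = T.ERight m r c₀ := by
  unfold ERight
  rw [count_flatMap_revmap, Finset.sum_Ico_eq_sum_range,
    show nu.part 1 + 1 - c₀ = nu.part 1 - (c₀ - 1) by omega]
  refine Finset.sum_congr rfl fun i _ => ?_
  rw [count_edgeWord]
  congr 1
  omega

theorem cut1 (hlr : IsLatticeWord T.wr) {k r' c₀ : ℕ} (hk : 1 ≤ k) (hr1 : 1 ≤ r')
    (hrL : r' ≤ nu.len) (hc1 : 1 ≤ c₀) (hcW : c₀ ≤ nu.part 1) :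
    T.RowsTo (k+1) r' + T.BRight (k+1) r' c₀ ≤ T.RowsTo k r' + T.BRight k r' c₀ := by
  obtain ⟨Z, hZ⟩ := flatMap_mid_split (fun i0 => T.rowB (i0+1) ++ T.rowE (i0+1))
    (show r' - 1 < nu.len by omega)
  rw [show r' - 1 + 1 = r' by omega] at hZ
  set A := ((((List.range (nu.part 1 - (c₀ - 1))).map (fun x => (c₀ - 1) + x)).reverse).flatMap
      fun j0 => T.boxWord r' (j0+1)) with hA
  have hsplit : T.rowB r' = A ++ (List.range (c₀ - 1)).reverse.flatMap
      fun j0 => T.boxWord r' (j0+1) := by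
    unfold rowB
    exact rev_flatMap_split _ (by omega)
  set Pre := (List.range (r' - 1)).flatMap fun i0 => T.rowB (i0+1) ++ T.rowE (i0+1) with hPre
  have hwr : T.wr = Pre ++ (A ++ (((List.range (c₀ - 1)).reverse.flatMap
      fun j0 => T.boxWord r' (j0+1)) ++ (T.rowE r' ++ Z))) := by
    rw [wr_eq, hZ, hsplit]
    simp [List.append_assoc]
  have htake : T.wr.take (Pre.length + A.length) = Pre ++ A := by
    rw [hwr, take_prefix₂]
  have hlat := hlr k hk (Pre.length + A.length)
  rw [htake] at hlat
  simp only [List.count_append] at hlat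
  have e1 : Pre.count (k+1) = T.RowsTo (k+1) r' := by
    rw [hPre, count_pre, show r' - 1 + 1 = r' by omega]
  have e2 : Pre.count k = T.RowsTo k r' := by
    rw [hPre, count_pre, show r' - 1 + 1 = r' by omega]
  have e3 : A.count (k+1) = T.BRight (k+1) r' c₀ := T.count_upperBoxes (k+1) r' c₀ hc1
  have e4 : A.count k = T.BRight k r' c₀ := T.count_upperBoxes k r' c₀ hc1
  omega

theorem cut2 (hlr : IsLatticeWord T.wr) {k r' c₀ : ℕ} (hk : 1 ≤ k) (hr1 : 1 ≤ r')
    (hrL : r' ≤ nu.len) (hc1 : 1 ≤ c₀) (hcW : c₀ ≤ nu.part 1) :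
    T.RowsTo (k+1) r' + T.rB (k+1) r' + T.ERight (k+1) r' c₀
      ≤ T.RowsTo k r' + T.rB k r' + T.ERight k r' c₀ := by
  obtain ⟨Z, hZ⟩ := flatMap_mid_split (fun i0 => T.rowB (i0+1) ++ T.rowE (i0+1))
    (show r' - 1 < nu.len by omega)
  rw [show r' - 1 + 1 = r' by omega] at hZ
  set Ae := ((((List.range (nu.part 1 - (c₀ - 1))).map (fun x => (c₀ - 1) + x)).reverse).flatMap
      fun j0 => T.edgeWord r' (j0+1)) with hAe
  have hsplit : T.rowE r' = Ae ++ (List.range (c₀ - 1)).reverse.flatMap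
      fun j0 => T.edgeWord r' (j0+1) := by
    unfold rowE
    exact rev_flatMap_split _ (by omega)
  set Pre := (List.range (r' - 1)).flatMap fun i0 => T.rowB (i0+1) ++ T.rowE (i0+1) with hPre
  have hwr : T.wr = Pre ++ ((T.rowB r' ++ Ae) ++ (((List.range (c₀ - 1)).reverse.flatMap
      fun j0 => T.edgeWord r' (j0+1)) ++ Z)) := by
    rw [wr_eq, hZ, hsplit]
    simp [List.append_assoc]
  have htake : T.wr.take (Pre.length + (T.rowB r' ++ Ae).length) = Pre ++ (T.rowB r' ++ Ae) := by
    rw [hwr, take_prefix₂]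
  have hlat := hlr k hk (Pre.length + (T.rowB r' ++ Ae).length)
  rw [htake] at hlat
  simp only [List.count_append] at hlat
  have e1 : Pre.count (k+1) = T.RowsTo (k+1) r' := by
    rw [hPre, count_pre, show r' - 1 + 1 = r' by omega]
  have e2 : Pre.count k = T.RowsTo k r' := by
    rw [hPre, count_pre, show r' - 1 + 1 = r' by omega]
  have e3 : (T.rowB r').count (k+1) = T.rB (k+1) r' := T.count_rowB (k+1) r'
  have e4 : (T.rowB r').count k = T.rB k r' := T.count_rowB k r'
  have e5 : Ae.count (k+1) = T.ERight (k+1) r' c₀ := T.count_upperEdges (k+1) r' c₀ hc1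
  have e6 : Ae.count k = T.ERight k r' c₀ := T.count_upperEdges k r' c₀ hc1
  omega


/-! ### Position bounds for counts -/

theorem cB_pos_facts {m r c : ℕ} (h : T.cB m r c ≠ 0) :
    IsBox lam nu r c ∧ T.box r c = m ∧ 1 ≤ r ∧ r ≤ nu.len ∧ 1 ≤ c ∧ c ≤ nu.part 1 := by
  have h' := T.cB_pos_iff (m := m) (r := r) (c := c) |>.mp (by omega)
  have hb := isBox_bounds h'.1
  exact ⟨h'.1, h'.2, hb.1, hb.2.1, hb.2.2.1, hb.2.2.2⟩

theorem cE_pos_facts {m r c : ℕ} (h : T.cE m r c ≠ 0) :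
    IsEdge lam nu r c ∧ m ∈ T.edge r c ∧ 1 ≤ r ∧ r ≤ nu.len ∧ 1 ≤ c ∧ c ≤ nu.part 1 := by
  have h' := T.cE_pos_iff (m := m) (r := r) (c := c) |>.mp (by omega)
  have he := T.isEdge_of_mem h'
  have hb := isEdge_bounds he
  exact ⟨he, h', hb.1, hb.2.1, hb.2.2.1, hb.2.2.2⟩

/-! ### Each column carries each label at most once -/

theorem sum_le_one_of_unique {s : Finset ℕ} {f : ℕ → ℕ} (h1 : ∀ x ∈ s, f x ≤ 1)
    (h2 : ∀ x ∈ s, ∀ y ∈ s, f x ≠ 0 → f y ≠ 0 → x = y) : ∑ x ∈ s, f x ≤ 1 := by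
  by_cases hz : ∀ x ∈ s, f x = 0
  · rw [Finset.sum_eq_zero hz]
    omega
  · push_neg at hz
    obtain ⟨x₀, hx₀, hfx⟩ := hz
    rw [Finset.sum_eq_single_of_mem x₀ hx₀ (fun y hy hne => ?_)]
    · exact h1 x₀ hx₀
    · by_contra hyz
      exact hne (h2 y hy x₀ hx₀ hyz hfx)

theorem colCnt_le_one (m c : ℕ) : T.colCnt m c ≤ 1 := by
  unfold colCnt
  apply sum_le_one_of_unique
  · intro r _
    by_cases hB : T.cB m r c ≠ 0
    · obtain ⟨hbx, hbv, -⟩ := T.cB_pos_facts hB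
      have hE : T.cE m r c = 0 := by
        by_contra hE
        obtain ⟨he, hmem, -⟩ := T.cE_pos_facts hE
        have := T.edge_gt_box r c hbx m hmem
        omega
      have := T.cB_le_one m r c
      omega
    · have := T.cE_le_one m r c
      omega
  · intro r1 _ r2 _ hf1 hf2
    by_contra hne
    -- two occurrences in the same column in distinct rows: contradiction
    have key : ∀ ra rb : ℕ, ra < rb → (T.cB m ra c ≠ 0 ∨ T.cE m ra c ≠ 0) →
        (T.cB m rb c ≠ 0 ∨ T.cE m rb c ≠ 0) → False := by
      intro ra rb hab ha hb
      rcases ha with ha | ha <;> rcases hb with hb | hb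
      · obtain ⟨h1, h2, -⟩ := T.cB_pos_facts ha
        obtain ⟨h3, h4, -⟩ := T.cB_pos_facts hb
        have := T.co_bb h1 h3 hab
        omega
      · obtain ⟨h1, h2, -⟩ := T.cB_pos_facts ha
        obtain ⟨h3, h4, -⟩ := T.cE_pos_facts hb
        have := T.co_be h1 h3 h4 (le_of_lt hab)
        omega
      · obtain ⟨h1, h2, -⟩ := T.cE_pos_facts ha
        obtain ⟨h3, h4, -⟩ := T.cB_pos_facts hb
        have := T.co_eb h1 h2 h3 hab
        omega
      · obtain ⟨h1, h2, -⟩ := T.cE_pos_facts ha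
        obtain ⟨h3, h4, -⟩ := T.cE_pos_facts hb
        have := T.co_ee h1 h2 h3 h4 hab
        omega
    have hf1' : T.cB m r1 c ≠ 0 ∨ T.cE m r1 c ≠ 0 := by omega
    have hf2' : T.cB m r2 c ≠ 0 ∨ T.cE m r2 c ≠ 0 := by omega
    rcases Nat.lt_or_ge r1 r2 with h | h
    · exact key r1 r2 h hf1' hf2'
    · exact key r2 r1 (by omega) hf2' hf1'

/-! ### Region sum estimates -/

theorem RowsTo_expand (m J : ℕ) : T.RowsTo m J
    = ∑ r ∈ Finset.Ico 1 J, ∑ c ∈ Finset.Ico 1 (nu.part 1 + 1), (T.cB m r c + T.cE m r c) := by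
  unfold RowsTo rB rE
  refine Finset.sum_congr rfl fun r _ => ?_
  rw [← Finset.sum_add_distrib]

theorem V_eq_zero {m j : ℕ} (h : nu.part 1 < j) : T.V m j = 0 := by
  unfold V
  rw [Finset.Ico_eq_empty (by omega), Finset.sum_empty]

/-- maximality estimate, box-dominant case -/
theorem V_le_box (k j r' cs : ℕ) (hj1 : 1 ≤ j) (hr1 : 1 ≤ r') (hrL : r' ≤ nu.len)
    (hjc : j ≤ cs) (hcsW : cs ≤ nu.part 1 + 1)
    (hmaxB : ∀ r c, j ≤ c → r' < r → T.cB (k+1) r c = 0)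
    (hmaxE : ∀ r c, j ≤ c → r' ≤ r → T.cE (k+1) r c = 0)
    (hmin : ∀ c, j ≤ c → c < cs → T.cB (k+1) r' c = 0) :
    T.V (k+1) j ≤ T.RowsTo (k+1) r' + T.BRight (k+1) r' cs := by
  have hVeq : T.V (k+1) j = (∑ c ∈ Finset.Ico j (nu.part 1 + 1),
      ∑ r ∈ Finset.Ico 1 r', (T.cB (k+1) r c + T.cE (k+1) r c))
      + ∑ c ∈ Finset.Ico j (nu.part 1 + 1), T.cB (k+1) r' c := by
    unfold V colCnt
    rw [← Finset.sum_add_distrib]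
    refine Finset.sum_congr rfl fun c hc => ?_
    have hc' := Finset.mem_Ico.mp hc
    rw [← Finset.sum_Ico_consecutive _ (show 1 ≤ r' by omega) (show r' ≤ nu.len + 1 by omega)]
    congr 1
    have hs := Finset.sum_eq_single_of_mem (s := Finset.Ico r' (nu.len + 1))
      (f := fun r => T.cB (k+1) r c + T.cE (k+1) r c) r'
      (Finset.mem_Ico.mpr ⟨le_refl _, by omega⟩) (fun r hr hne => by
        have hr' := Finset.mem_Ico.mp hr
        simp [hmaxB r c hc'.1 (by omega), hmaxE r c hc'.1 (by omega)])
    rw [hs]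
    beta_reduce
    rw [hmaxE r' c hc'.1 (le_refl _)]
    omega
  rw [hVeq]
  have h1 : (∑ c ∈ Finset.Ico j (nu.part 1 + 1),
      ∑ r ∈ Finset.Ico 1 r', (T.cB (k+1) r c + T.cE (k+1) r c)) ≤ T.RowsTo (k+1) r' := by
    rw [RowsTo_expand, Finset.sum_comm]
    refine Finset.sum_le_sum fun r _ => ?_
    exact Finset.sum_le_sum_of_subset (Finset.Ico_subset_Ico (by omega) (le_refl _))
  have h2 : (∑ c ∈ Finset.Ico j (nu.part 1 + 1), T.cB (k+1) r' c) = T.BRight (k+1) r' cs := by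
    unfold BRight
    rw [← Finset.sum_Ico_consecutive _ hjc hcsW]
    have : (∑ c ∈ Finset.Ico j cs, T.cB (k+1) r' c) = 0 :=
      Finset.sum_eq_zero fun c hc => by
        have hc' := Finset.mem_Ico.mp hc
        exact hmin c hc'.1 hc'.2
    omega
  omega

/-- lower estimate for the `k`-count, box-dominant case -/
theorem V_ge_box (k j r' c₀ : ℕ) (hj1 : 1 ≤ j) (hr1 : 1 ≤ r') (hrL : r' ≤ nu.len)
    (hjc : j ≤ c₀) (hc₀W : c₀ ≤ nu.part 1 + 1) :
    T.RowsTo k r' + T.BRight k r' c₀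
      ≤ T.V k j + ∑ c ∈ Finset.Ico 1 j, ∑ r ∈ Finset.Ico 1 r', (T.cB k r c + T.cE k r c) := by
  have hRT : T.RowsTo k r' = (∑ c ∈ Finset.Ico 1 j, ∑ r ∈ Finset.Ico 1 r',
        (T.cB k r c + T.cE k r c))
      + ∑ c ∈ Finset.Ico j (nu.part 1 + 1), ∑ r ∈ Finset.Ico 1 r',
        (T.cB k r c + T.cE k r c) := by
    rw [RowsTo_expand, Finset.sum_comm (s := Finset.Ico 1 j),
      Finset.sum_comm (s := Finset.Ico j (nu.part 1 + 1)), ← Finset.sum_add_distrib]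
    refine Finset.sum_congr rfl fun r _ => ?_
    rw [Finset.sum_Ico_consecutive _ (show 1 ≤ j by omega) (show j ≤ nu.part 1 + 1 by omega)]
  have hBR : T.BRight k r' c₀ = ∑ c ∈ Finset.Ico j (nu.part 1 + 1),
      (if c₀ ≤ c then T.cB k r' c else 0) := by
    unfold BRight
    rw [← Finset.sum_Ico_consecutive _ hjc hc₀W]
    have e1 : (∑ c ∈ Finset.Ico j c₀, (if c₀ ≤ c then T.cB k r' c else 0)) = 0 :=
      Finset.sum_eq_zero fun c hc => by
        rw [if_neg (by have := Finset.mem_Ico.mp hc; omega)]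
    have e2 : (∑ c ∈ Finset.Ico c₀ (nu.part 1 + 1), (if c₀ ≤ c then T.cB k r' c else 0))
        = ∑ c ∈ Finset.Ico c₀ (nu.part 1 + 1), T.cB k r' c :=
      Finset.sum_congr rfl fun c hc => by
        rw [if_pos (Finset.mem_Ico.mp hc).1]
    omega
  have hcol : ∀ c ∈ Finset.Ico j (nu.part 1 + 1),
      (∑ r ∈ Finset.Ico 1 r', (T.cB k r c + T.cE k r c))
        + (if c₀ ≤ c then T.cB k r' c else 0) ≤ T.colCnt k c := by
    intro c _
    unfold colCnt
    rw [← Finset.sum_Ico_consecutive _ (show 1 ≤ r' by omega) (show r' ≤ nu.len + 1 by omega)]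
    have h1 : (if c₀ ≤ c then T.cB k r' c else 0) ≤ T.cB k r' c + T.cE k r' c := by
      split <;> omega
    have h2 : T.cB k r' c + T.cE k r' c
        ≤ ∑ r ∈ Finset.Ico r' (nu.len + 1), (T.cB k r c + T.cE k r c) :=
      Finset.single_le_sum (f := fun r => T.cB k r c + T.cE k r c)
        (fun x _ => Nat.zero_le _) (Finset.mem_Ico.mpr ⟨le_refl _, by omega⟩)
    omega
  have hsum : (∑ c ∈ Finset.Ico j (nu.part 1 + 1), ∑ r ∈ Finset.Ico 1 r',
        (T.cB k r c + T.cE k r c))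
      + (∑ c ∈ Finset.Ico j (nu.part 1 + 1), (if c₀ ≤ c then T.cB k r' c else 0))
      ≤ T.V k j := by
    unfold V
    rw [← Finset.sum_add_distrib]
    exact Finset.sum_le_sum hcol
  omega

/-- maximality estimate, edge-dominant case -/
theorem V_le_edge (k j i cs : ℕ) (hj1 : 1 ≤ j) (hi1 : 1 ≤ i) (hiL : i ≤ nu.len)
    (hjc : j ≤ cs) (hcsW : cs ≤ nu.part 1 + 1)
    (hmaxB : ∀ r c, j ≤ c → i < r → T.cB (k+1) r c = 0)
    (hmaxE : ∀ r c, j ≤ c → i < r → T.cE (k+1) r c = 0)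
    (hmin : ∀ c, j ≤ c → c < cs → T.cE (k+1) i c = 0) :
    T.V (k+1) j ≤ T.RowsTo (k+1) i + T.rB (k+1) i + T.ERight (k+1) i cs := by
  have hVeq : T.V (k+1) j = (∑ c ∈ Finset.Ico j (nu.part 1 + 1),
      ∑ r ∈ Finset.Ico 1 i, (T.cB (k+1) r c + T.cE (k+1) r c))
      + ((∑ c ∈ Finset.Ico j (nu.part 1 + 1), T.cB (k+1) i c)
        + ∑ c ∈ Finset.Ico j (nu.part 1 + 1), T.cE (k+1) i c) := by
    rw [← Finset.sum_add_distrib, ← Finset.sum_add_distrib]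
    unfold V colCnt
    refine Finset.sum_congr rfl fun c hc => ?_
    have hc' := Finset.mem_Ico.mp hc
    rw [← Finset.sum_Ico_consecutive _ (show 1 ≤ i by omega) (show i ≤ nu.len + 1 by omega)]
    congr 1
    have hs := Finset.sum_eq_single_of_mem (s := Finset.Ico i (nu.len + 1))
      (f := fun r => T.cB (k+1) r c + T.cE (k+1) r c) i
      (Finset.mem_Ico.mpr ⟨le_refl _, by omega⟩) (fun r hr hne => by
        have hr' := Finset.mem_Ico.mp hr
        simp [hmaxB r c hc'.1 (by omega), hmaxE r c hc'.1 (by omega)])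
    rw [hs]
  rw [hVeq]
  have h1 : (∑ c ∈ Finset.Ico j (nu.part 1 + 1),
      ∑ r ∈ Finset.Ico 1 i, (T.cB (k+1) r c + T.cE (k+1) r c)) ≤ T.RowsTo (k+1) i := by
    rw [RowsTo_expand, Finset.sum_comm]
    refine Finset.sum_le_sum fun r _ => ?_
    exact Finset.sum_le_sum_of_subset (Finset.Ico_subset_Ico (by omega) (le_refl _))
  have h2 : (∑ c ∈ Finset.Ico j (nu.part 1 + 1), T.cB (k+1) i c) ≤ T.rB (k+1) i := by
    unfold rB
    apply Finset.sum_le_sum_of_subset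
    exact Finset.Ico_subset_Ico (by omega) (le_refl _)
  have h3 : (∑ c ∈ Finset.Ico j (nu.part 1 + 1), T.cE (k+1) i c) = T.ERight (k+1) i cs := by
    unfold ERight
    rw [← Finset.sum_Ico_consecutive _ hjc hcsW]
    have : (∑ c ∈ Finset.Ico j cs, T.cE (k+1) i c) = 0 :=
      Finset.sum_eq_zero fun c hc => by
        have hc' := Finset.mem_Ico.mp hc
        exact hmin c hc'.1 hc'.2
    omega
  omega

/-- lower estimate for the `k`-count, edge-dominant case -/
theorem V_ge_edge (k j i c₀ : ℕ) (hj1 : 1 ≤ j) (hi1 : 1 ≤ i) (hiL : i ≤ nu.len)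
    (hjc : j ≤ c₀) (hc₀W : c₀ ≤ nu.part 1 + 1) :
    T.RowsTo k i + T.rB k i + T.ERight k i c₀
      ≤ T.V k j + ∑ c ∈ Finset.Ico 1 j,
          ((∑ r ∈ Finset.Ico 1 i, (T.cB k r c + T.cE k r c)) + T.cB k i c) := by
  have hRT : T.RowsTo k i = (∑ c ∈ Finset.Ico 1 j, ∑ r ∈ Finset.Ico 1 i,
        (T.cB k r c + T.cE k r c))
      + ∑ c ∈ Finset.Ico j (nu.part 1 + 1), ∑ r ∈ Finset.Ico 1 i,
        (T.cB k r c + T.cE k r c) := by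
    rw [RowsTo_expand, Finset.sum_comm (s := Finset.Ico 1 j),
      Finset.sum_comm (s := Finset.Ico j (nu.part 1 + 1)), ← Finset.sum_add_distrib]
    refine Finset.sum_congr rfl fun r _ => ?_
    rw [Finset.sum_Ico_consecutive _ (show 1 ≤ j by omega) (show j ≤ nu.part 1 + 1 by omega)]
  have hrB : T.rB k i = (∑ c ∈ Finset.Ico 1 j, T.cB k i c)
      + ∑ c ∈ Finset.Ico j (nu.part 1 + 1), T.cB k i c := by
    unfold rB
    rw [Finset.sum_Ico_consecutive _ (show 1 ≤ j by omega) (show j ≤ nu.part 1 + 1 by omega)]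
  have hER : T.ERight k i c₀ = ∑ c ∈ Finset.Ico j (nu.part 1 + 1),
      (if c₀ ≤ c then T.cE k i c else 0) := by
    unfold ERight
    rw [← Finset.sum_Ico_consecutive _ hjc hc₀W]
    have e1 : (∑ c ∈ Finset.Ico j c₀, (if c₀ ≤ c then T.cE k i c else 0)) = 0 :=
      Finset.sum_eq_zero fun c hc => by
        rw [if_neg (by have := Finset.mem_Ico.mp hc; omega)]
    have e2 : (∑ c ∈ Finset.Ico c₀ (nu.part 1 + 1), (if c₀ ≤ c then T.cE k i c else 0))
        = ∑ c ∈ Finset.Ico c₀ (nu.part 1 + 1), T.cE k i c :=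
      Finset.sum_congr rfl fun c hc => by
        rw [if_pos (Finset.mem_Ico.mp hc).1]
    omega
  have hcol : ∀ c ∈ Finset.Ico j (nu.part 1 + 1),
      ((∑ r ∈ Finset.Ico 1 i, (T.cB k r c + T.cE k r c)) + T.cB k i c)
        + (if c₀ ≤ c then T.cE k i c else 0) ≤ T.colCnt k c := by
    intro c _
    unfold colCnt
    rw [← Finset.sum_Ico_consecutive _ (show 1 ≤ i by omega) (show i ≤ nu.len + 1 by omega)]
    have h1 : T.cB k i c + (if c₀ ≤ c then T.cE k i c else 0)
        ≤ T.cB k i c + T.cE k i c := by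
      split <;> omega
    have h2 : T.cB k i c + T.cE k i c
        ≤ ∑ r ∈ Finset.Ico i (nu.len + 1), (T.cB k r c + T.cE k r c) :=
      Finset.single_le_sum (f := fun r => T.cB k r c + T.cE k r c)
        (fun x _ => Nat.zero_le _) (Finset.mem_Ico.mpr ⟨le_refl _, by omega⟩)
    omega
  have hsum : (∑ c ∈ Finset.Ico j (nu.part 1 + 1), ∑ r ∈ Finset.Ico 1 i,
        (T.cB k r c + T.cE k r c))
      + ((∑ c ∈ Finset.Ico j (nu.part 1 + 1), T.cB k i c)
        + ∑ c ∈ Finset.Ico j (nu.part 1 + 1), (if c₀ ≤ c then T.cE k i c else 0))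
      ≤ T.V k j := by
    unfold V
    rw [← Finset.sum_add_distrib, ← Finset.sum_add_distrib]
    refine Finset.sum_le_sum fun c hc => ?_
    have := hcol c hc
    omega
  have hsplit : (∑ c ∈ Finset.Ico 1 j,
      ((∑ r ∈ Finset.Ico 1 i, (T.cB k r c + T.cE k r c)) + T.cB k i c))
      = (∑ c ∈ Finset.Ico 1 j, ∑ r ∈ Finset.Ico 1 i, (T.cB k r c + T.cE k r c))
        + ∑ c ∈ Finset.Ico 1 j, T.cB k i c := Finset.sum_add_distrib
  omega

/-- the common finishing step: an interval of columns each containing a `k`. -/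
theorem finish_interval (k j cs : ℕ) (hj1 : 1 ≤ j) (hjc : j ≤ cs) (hcsW : cs ≤ nu.part 1)
    (hcols : ∀ c, j ≤ c → c ≤ cs → 1 ≤ T.colCnt k c)
    (IH : T.V (k+1) (cs+1) ≤ T.V k (cs+1)) : T.V (k+1) j ≤ T.V k j := by
  have hs : ∀ m, T.V m j = (∑ c ∈ Finset.Ico j (cs+1), T.colCnt m c) + T.V m (cs+1) := by
    intro m
    unfold V
    rw [Finset.sum_Ico_consecutive _ (show j ≤ cs + 1 by omega)
      (show cs + 1 ≤ nu.part 1 + 1 by omega)]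
  rw [hs (k+1), hs k]
  have h1 : (∑ c ∈ Finset.Ico j (cs+1), T.colCnt (k+1) c)
      ≤ ∑ c ∈ Finset.Ico j (cs+1), 1 :=
    Finset.sum_le_sum fun c _ => T.colCnt_le_one (k+1) c
  have h2 : (∑ c ∈ Finset.Ico j (cs+1), (1:ℕ))
      ≤ ∑ c ∈ Finset.Ico j (cs+1), T.colCnt k c :=
    Finset.sum_le_sum fun c hc => by
      have hc' := Finset.mem_Ico.mp hc
      exact hcols c hc'.1 (by omega)
  omega


theorem colCnt_pos_of_cB {m r c : ℕ} (h : T.cB m r c ≠ 0) : 1 ≤ T.colCnt m c := by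
  obtain ⟨-, -, f1, f2, -, -⟩ := T.cB_pos_facts h
  unfold colCnt
  calc 1 ≤ T.cB m r c + T.cE m r c := by omega
  _ ≤ ∑ r ∈ Finset.Ico 1 (nu.len + 1), (T.cB m r c + T.cE m r c) :=
      Finset.single_le_sum (f := fun r => T.cB m r c + T.cE m r c)
        (fun x _ => Nat.zero_le _) (Finset.mem_Ico.mpr ⟨f1, by omega⟩)

/-! ### The two main cases of the induction step -/

theorem case_edge (hlr : IsLatticeWord T.wr) {k : ℕ} (hk : 1 ≤ k) (j : ℕ) (hj : 1 ≤ j)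
    (hjW : j ≤ nu.part 1) (IH : ∀ j', j < j' → T.V (k+1) j' ≤ T.V k j')
    (i : ℕ) (hi1 : 1 ≤ i) (hiL : i ≤ nu.len)
    (hex : ∃ c, j ≤ c ∧ c ≤ nu.part 1 ∧ T.cE (k+1) i c ≠ 0)
    (hmaxB : ∀ r c, j ≤ c → i < r → T.cB (k+1) r c = 0)
    (hmaxE : ∀ r c, j ≤ c → i < r → T.cE (k+1) r c = 0) :
    T.V (k+1) j ≤ T.V k j := by
  obtain ⟨c₁, hc₁j, hc₁W, hc₁⟩ := hex
  set colsE := (Finset.Ico j (nu.part 1 + 1)).filter (fun c => T.cE (k+1) i c ≠ 0) with hcolsE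
  have hcne : colsE.Nonempty :=
    ⟨c₁, Finset.mem_filter.mpr ⟨Finset.mem_Ico.mpr ⟨hc₁j, by omega⟩, hc₁⟩⟩
  set cs := colsE.min' hcne with hcs
  have hcsmem := colsE.min'_mem hcne
  rw [Finset.mem_filter, Finset.mem_Ico] at hcsmem
  obtain ⟨⟨hcsj, hcsW⟩, hcsne⟩ := hcsmem
  have hminE : ∀ c, j ≤ c → c < cs → T.cE (k+1) i c = 0 := by
    intro c hjc hlt
    by_contra hne
    have : c ∈ colsE := by
      obtain ⟨-, -, -, -, -, f4⟩ := T.cE_pos_facts hne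
      exact Finset.mem_filter.mpr ⟨Finset.mem_Ico.mpr ⟨hjc, by omega⟩, hne⟩
    have := colsE.min'_le c this
    omega
  have hle1 : T.V (k+1) j ≤ T.RowsTo (k+1) i + T.rB (k+1) i + T.ERight (k+1) i cs :=
    T.V_le_edge k j i cs hj hi1 hiL hcsj (by omega) hmaxB hmaxE hminE
  have hcut := T.cut2 hlr (r' := i) (c₀ := cs) hk hi1 hiL (by omega) (by omega)
  have hge := T.V_ge_edge k j i cs hj hi1 hiL hcsj (by omega)
  by_cases hM : (∑ c ∈ Finset.Ico 1 j,
      ((∑ r ∈ Finset.Ico 1 i, (T.cB k r c + T.cE k r c)) + T.cB k i c)) = 0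
  · omega
  -- there is a k in the upper-left region
  obtain ⟨cx, hcxm, hcx⟩ := Finset.exists_ne_zero_of_sum_ne_zero hM
  rw [Finset.mem_Ico] at hcxm
  have hedgeY : IsEdge lam nu i cs ∧ (k+1) ∈ T.edge i cs := by
    have := T.cE_pos_facts hcsne
    exact ⟨this.1, this.2.1⟩
  have hfin : (∀ c, j ≤ c → c ≤ cs → 1 ≤ T.colCnt k c) → T.V (k+1) j ≤ T.V k j := by
    intro hcols
    exact T.finish_interval k j cs hj hcsj (by omega) hcols (IH (cs+1) (by omega))
  by_cases hXb : T.cB k i cx ≠ 0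
  · -- box k at (i, cx)
    obtain ⟨hbx, hbv, -, -, -, -⟩ := T.cB_pos_facts hXb
    have hD := T.D2 hbx hbv hedgeY.1 hedgeY.2 (le_refl i) (by omega)
    apply hfin
    intro c hjc hccs
    exact T.colCnt_pos_of_cB (m := k) (r := i) (c := c) (by
      have := hD c (by omega) hccs
      rw [T.cB_eq_one this.1 this.2]
      omega)
  · -- the contribution is from rows < i at column cx
    have hXs : (∑ r ∈ Finset.Ico 1 i, (T.cB k r cx + T.cE k r cx)) ≠ 0 := by omega
    obtain ⟨rx, hrxm, hrx⟩ := Finset.exists_ne_zero_of_sum_ne_zero hXs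
    rw [Finset.mem_Ico] at hrxm
    by_cases hXb2 : T.cB k rx cx ≠ 0
    · obtain ⟨hbx, hbv, -, -, -, -⟩ := T.cB_pos_facts hXb2
      have hD := T.D2 hbx hbv hedgeY.1 hedgeY.2 (by omega) (by omega)
      apply hfin
      intro c hjc hccs
      exact T.colCnt_pos_of_cB (m := k) (r := i) (c := c) (by
        have := hD c (by omega) hccs
        rw [T.cB_eq_one this.1 this.2]
        omega)
    · have hXe : T.cE k rx cx ≠ 0 := by omega
      obtain ⟨hex', hem, -, -, -, -⟩ := T.cE_pos_facts hXe
      exact absurd (T.D3 hex' hem hedgeY.1 hedgeY.2 (by omega) (by omega)) not_false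

theorem case_box (hlr : IsLatticeWord T.wr) {k : ℕ} (hk : 1 ≤ k) (j : ℕ) (hj : 1 ≤ j)
    (hjW : j ≤ nu.part 1) (IH : ∀ j', j < j' → T.V (k+1) j' ≤ T.V k j')
    (r' : ℕ) (hr1 : 1 ≤ r') (hrL : r' ≤ nu.len)
    (hex : ∃ c, j ≤ c ∧ c ≤ nu.part 1 ∧ T.cB (k+1) r' c ≠ 0)
    (hmaxB : ∀ r c, j ≤ c → r' < r → T.cB (k+1) r c = 0)
    (hmaxE : ∀ r c, j ≤ c → r' ≤ r → T.cE (k+1) r c = 0) :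
    T.V (k+1) j ≤ T.V k j := by
  obtain ⟨c₁, hc₁j, hc₁W, hc₁⟩ := hex
  set colsB := (Finset.Ico j (nu.part 1 + 1)).filter (fun c => T.cB (k+1) r' c ≠ 0) with hcolsB
  have hcne : colsB.Nonempty :=
    ⟨c₁, Finset.mem_filter.mpr ⟨Finset.mem_Ico.mpr ⟨hc₁j, by omega⟩, hc₁⟩⟩
  set cs := colsB.min' hcne with hcs
  have hcsmem := colsB.min'_mem hcne
  rw [Finset.mem_filter, Finset.mem_Ico] at hcsmem
  obtain ⟨⟨hcsj, hcsW⟩, hcsne⟩ := hcsmem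
  have hminB : ∀ c, j ≤ c → c < cs → T.cB (k+1) r' c = 0 := by
    intro c hjc hlt
    by_contra hne
    have : c ∈ colsB := by
      obtain ⟨-, -, -, -, -, f4⟩ := T.cB_pos_facts hne
      exact Finset.mem_filter.mpr ⟨Finset.mem_Ico.mpr ⟨hjc, by omega⟩, hne⟩
    have := colsB.min'_le c this
    omega
  have hle1 : T.V (k+1) j ≤ T.RowsTo (k+1) r' + T.BRight (k+1) r' cs :=
    T.V_le_box k j r' cs hj hr1 hrL hcsj (by omega) hmaxB hmaxE hminB
  have hcut := T.cut1 hlr (r' := r') (c₀ := cs) hk hr1 hrL (by omega) (by omega)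
  have hge := T.V_ge_box k j r' cs hj hr1 hrL hcsj (by omega)
  have hboxY : IsBox lam nu r' cs ∧ T.box r' cs = k + 1 := by
    have := T.cB_pos_facts hcsne
    exact ⟨this.1, this.2.1⟩
  have hfin : (∀ c, j ≤ c → c ≤ cs → 1 ≤ T.colCnt k c) → T.V (k+1) j ≤ T.V k j := by
    intro hcols
    exact T.finish_interval k j cs hj hcsj (by omega) hcols (IH (cs+1) (by omega))
  by_cases hM : (∑ c ∈ Finset.Ico 1 j,
      ∑ r ∈ Finset.Ico 1 r', (T.cB k r c + T.cE k r c)) = 0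
  · omega
  by_cases hbox : ∃ c r, (1 ≤ c ∧ c < j ∧ 1 ≤ r ∧ r < r') ∧ T.cB k r c ≠ 0
  · -- a box k in the upper-left region: interval of k's just above row r'
    obtain ⟨cx, rx, ⟨-, hcxj, -, hrxr⟩, hXb⟩ := hbox
    obtain ⟨hbx, hbv, -, -, -, -⟩ := T.cB_pos_facts hXb
    have hD := T.D1 hbx hbv hboxY.1 hboxY.2 hrxr (by omega)
    apply hfin
    intro c hjc hccs
    exact T.colCnt_pos_of_cB (m := k) (r := r' - 1) (c := c) (by
      have := hD c (by omega) hccs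
      rw [T.cB_eq_one this.1 this.2]
      omega)
  · -- no box k in the upper-left region: all its k's are edges just above row r'
    push_neg at hbox
    obtain ⟨cx, hcxm, hcx⟩ := Finset.exists_ne_zero_of_sum_ne_zero hM
    rw [Finset.mem_Ico] at hcxm
    obtain ⟨rx, hrxm, hrx⟩ := Finset.exists_ne_zero_of_sum_ne_zero hcx
    rw [Finset.mem_Ico] at hrxm
    have hXb0 : T.cB k rx cx = 0 := by
      by_contra hne
      obtain ⟨-, -, f1, -, f3, -⟩ := T.cB_pos_facts hne
      exact hne (hbox cx rx ⟨f3, hcxm.2, f1, hrxm.2⟩)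
    have hXe : T.cE k rx cx ≠ 0 := by omega
    obtain ⟨hex', hem, -, -, -, -⟩ := T.cE_pos_facts hXe
    have hD4 := T.D4 hex' hem hboxY.1 hboxY.2 (by omega) (by omega)
    obtain ⟨hreq, hrow'⟩ := hD4
    -- cs = j
    have hcsj' : cs = j := by
      have hmem : j ∈ colsB := by
        have := hrow' j (by omega) (by omega)
        refine Finset.mem_filter.mpr ⟨Finset.mem_Ico.mpr ⟨le_refl _, by omega⟩, ?_⟩
        rw [T.cB_eq_one this.1 this.2]
        omega
      have := colsB.min'_le j hmem
      omega
    -- every edge k in the region is on edge row (r'-1)+1/2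
    have hrowEdges : ∀ c r, c < j → r < r' → T.cE k r c ≠ 0 → r = r' - 1 := by
      intro c r hc hr hne
      obtain ⟨he2, hm2, -, -, -, -⟩ := T.cE_pos_facts hne
      have := T.D4 he2 hm2 hboxY.1 hboxY.2 (by omega) (by omega)
      omega
    -- leftmost such edge column
    set colsA := (Finset.Ico 1 j).filter (fun c => T.cE k (r' - 1) c ≠ 0) with hcolsA
    have hane : colsA.Nonempty := by
      refine ⟨cx, Finset.mem_filter.mpr ⟨Finset.mem_Ico.mpr ⟨by omega, hcxm.2⟩, ?_⟩⟩
      rw [show r' - 1 = rx by omega]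
      exact hXe
    set a₁ := colsA.min' hane with ha₁
    have ha₁mem := colsA.min'_mem hane
    rw [Finset.mem_filter, Finset.mem_Ico] at ha₁mem
    obtain ⟨⟨ha₁1, ha₁j⟩, ha₁ne⟩ := ha₁mem
    have hminA : ∀ c, c < a₁ → T.cE k (r' - 1) c = 0 := by
      intro c hlt
      by_contra hne
      obtain ⟨-, -, -, -, f3, -⟩ := T.cE_pos_facts hne
      have : c ∈ colsA := Finset.mem_filter.mpr ⟨Finset.mem_Ico.mpr ⟨f3, by omega⟩, hne⟩
      have := colsA.min'_le c this
      omega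
    obtain ⟨hea, hma, -, -, -, -⟩ := T.cE_pos_facts ha₁ne
    have hrm1 : r' - 1 < r' := by omega
    have hD4a := T.D4 hea hma hboxY.1 hboxY.2 hrm1 (by omega)
    -- row r' is full of (k+1)s on [a₁, j]
    have hrowA : ∀ c, a₁ ≤ c → c ≤ j → IsBox lam nu r' c ∧ T.box r' c = k + 1 := by
      intro c h1 h2
      exact hD4a.2 c h1 (by omega)
    -- cut at a₁
    have hcutA := T.cut1 hlr (r' := r') (c₀ := a₁) hk hr1 hrL (by omega) (by omega)
    -- BRight splits
    have eB1 : T.BRight (k+1) r' a₁ = (j - a₁) + T.BRight (k+1) r' j := by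
      unfold BRight
      rw [← Finset.sum_Ico_consecutive _ (show a₁ ≤ j by omega)
        (show j ≤ nu.part 1 + 1 by omega)]
      congr 1
      have he : ∀ c ∈ Finset.Ico a₁ j, T.cB (k+1) r' c = 1 := by
        intro c hc
        have hc' := Finset.mem_Ico.mp hc
        have := hrowA c hc'.1 (by omega)
        exact T.cB_eq_one this.1 this.2
      rw [Finset.sum_congr rfl he, Finset.sum_const, smul_eq_mul, mul_one, Nat.card_Ico]
    have eB2 : T.BRight k r' a₁ = T.BRight k r' j := by
      unfold BRight
      rw [← Finset.sum_Ico_consecutive _ (show a₁ ≤ j by omega)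
        (show j ≤ nu.part 1 + 1 by omega)]
      have he : ∀ c ∈ Finset.Ico a₁ j, T.cB k r' c = 0 := by
        intro c hc
        have hc' := Finset.mem_Ico.mp hc
        have hb := hrowA c hc'.1 (by omega)
        unfold cB
        rw [if_neg]
        rintro ⟨-, hv⟩
        omega
      rw [Finset.sum_congr rfl he, Finset.sum_const, smul_eq_mul, mul_zero, zero_add]
    -- M is at most j - a₁
    have hMle : (∑ c ∈ Finset.Ico 1 j, ∑ r ∈ Finset.Ico 1 r', (T.cB k r c + T.cE k r c))
        ≤ j - a₁ := by
      have hinner : ∀ c ∈ Finset.Ico 1 j,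
          (∑ r ∈ Finset.Ico 1 r', (T.cB k r c + T.cE k r c)) = T.cE k (r' - 1) c := by
        intro c hc
        have hc' := Finset.mem_Ico.mp hc
        have hs := Finset.sum_eq_single_of_mem (s := Finset.Ico 1 r')
          (f := fun r => T.cB k r c + T.cE k r c) (r' - 1)
          (Finset.mem_Ico.mpr ⟨by omega, by omega⟩) (fun r hr hne => by
            have hr' := Finset.mem_Ico.mp hr
            show T.cB k r c + T.cE k r c = 0
            have hB0 : T.cB k r c = 0 := by
              by_contra hne2
              obtain ⟨-, -, f1, -, f3, -⟩ := T.cB_pos_facts hne2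
              exact hne2 (hbox c r ⟨f3, hc'.2, f1, hr'.2⟩)
            have hE0 : T.cE k r c = 0 := by
              by_contra hne2
              exact hne (hrowEdges c r hc'.2 hr'.2 hne2)
            omega)
        rw [hs]
        show T.cB k (r' - 1) c + T.cE k (r' - 1) c = T.cE k (r' - 1) c
        have hB0 : T.cB k (r' - 1) c = 0 := by
          by_contra hne2
          obtain ⟨-, -, f1, -, f3, -⟩ := T.cB_pos_facts hne2
          exact hne2 (hbox c (r' - 1) ⟨f3, hc'.2, f1, by omega⟩)
        omega
      rw [Finset.sum_congr rfl hinner,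
        ← Finset.sum_Ico_consecutive _ (show 1 ≤ a₁ by omega) (show a₁ ≤ j by omega)]
      have hz : (∑ c ∈ Finset.Ico 1 a₁, T.cE k (r' - 1) c) = 0 :=
        Finset.sum_eq_zero fun c hc => hminA c (Finset.mem_Ico.mp hc).2
      have hone : (∑ c ∈ Finset.Ico a₁ j, T.cE k (r' - 1) c)
          ≤ ∑ c ∈ Finset.Ico a₁ j, 1 :=
        Finset.sum_le_sum fun c _ => T.cE_le_one k (r' - 1) c
      rw [Finset.sum_const, smul_eq_mul, mul_one, Nat.card_Ico] at hone
      omega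
    -- the lower estimate with threshold j
    have hgej := T.V_ge_box k j r' j hj hr1 hrL (le_refl _) (by omega)
    rw [hcsj'] at hle1
    omega

/-! ### The key theorem: columns to the right are balanced -/

theorem star (hlr : IsLatticeWord T.wr) {k : ℕ} (hk : 1 ≤ k) :
    ∀ j, 1 ≤ j → T.V (k+1) j ≤ T.V k j := by
  suffices H : ∀ n j, 1 ≤ j → nu.part 1 + 1 ≤ j + n → T.V (k+1) j ≤ T.V k j by
    intro j hj
    exact H (nu.part 1 + 1) j hj (by omega)
  intro n
  induction n with
  | zero =>
    intro j hj hjn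
    rw [T.V_eq_zero (by omega)]
    exact Nat.zero_le _
  | succ n ih =>
    intro j hj hjn
    by_cases hjW : nu.part 1 < j
    · rw [T.V_eq_zero hjW]
      exact Nat.zero_le _
    push_neg at hjW
    have IH : ∀ j', j < j' → T.V (k+1) j' ≤ T.V k j' := fun j' hj' =>
      ih j' (by omega) (by omega)
    by_cases hV0 : T.V (k+1) j = 0
    · omega
    have hV0' : (∑ c ∈ Finset.Ico j (nu.part 1 + 1),
        ∑ r ∈ Finset.Ico 1 (nu.len + 1), (T.cB (k+1) r c + T.cE (k+1) r c)) ≠ 0 := hV0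
    obtain ⟨c₁, hc₁m, hc₁⟩ := Finset.exists_ne_zero_of_sum_ne_zero hV0'
    obtain ⟨r₁, hr₁m, hr₁⟩ := Finset.exists_ne_zero_of_sum_ne_zero hc₁
    -- rows with a k+1 somewhere in columns ≥ j
    set rowsB := (Finset.Ico 1 (nu.len + 1)).filter
      (fun r => ((Finset.Ico j (nu.part 1 + 1)).filter
        (fun c => T.cB (k+1) r c ≠ 0)).Nonempty) with hrowsB
    set rowsE := (Finset.Ico 1 (nu.len + 1)).filter
      (fun r => ((Finset.Ico j (nu.part 1 + 1)).filter
        (fun c => T.cE (k+1) r c ≠ 0)).Nonempty) with hrowsE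
    have hmemB : ∀ {r c}, j ≤ c → T.cB (k+1) r c ≠ 0 → r ∈ rowsB := by
      intro r c hjc h
      obtain ⟨-, -, f1, f2, -, f4⟩ := T.cB_pos_facts h
      exact Finset.mem_filter.mpr ⟨Finset.mem_Ico.mpr ⟨f1, by omega⟩,
        ⟨c, Finset.mem_filter.mpr ⟨Finset.mem_Ico.mpr ⟨hjc, by omega⟩, h⟩⟩⟩
    have hmemE : ∀ {r c}, j ≤ c → T.cE (k+1) r c ≠ 0 → r ∈ rowsE := by
      intro r c hjc h
      obtain ⟨-, -, f1, f2, -, f4⟩ := T.cE_pos_facts h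
      exact Finset.mem_filter.mpr ⟨Finset.mem_Ico.mpr ⟨f1, by omega⟩,
        ⟨c, Finset.mem_filter.mpr ⟨Finset.mem_Ico.mpr ⟨hjc, by omega⟩, h⟩⟩⟩
    have hBfacts : ∀ r ∈ rowsB, 1 ≤ r ∧ r ≤ nu.len ∧
        ∃ c, j ≤ c ∧ c ≤ nu.part 1 ∧ T.cB (k+1) r c ≠ 0 := by
      intro r hr
      obtain ⟨hr1, hcm⟩ := Finset.mem_filter.mp hr
      obtain ⟨c, hcmem⟩ := hcm
      obtain ⟨hcm1, hcm2⟩ := Finset.mem_filter.mp hcmem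
      rw [Finset.mem_Ico] at hr1 hcm1
      obtain ⟨-, -, -, -, -, f4⟩ := T.cB_pos_facts hcm2
      exact ⟨by omega, by omega, c, hcm1.1, f4, hcm2⟩
    have hEfacts : ∀ r ∈ rowsE, 1 ≤ r ∧ r ≤ nu.len ∧
        ∃ c, j ≤ c ∧ c ≤ nu.part 1 ∧ T.cE (k+1) r c ≠ 0 := by
      intro r hr
      obtain ⟨hr1, hcm⟩ := Finset.mem_filter.mp hr
      obtain ⟨c, hcmem⟩ := hcm
      obtain ⟨hcm1, hcm2⟩ := Finset.mem_filter.mp hcmem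
      rw [Finset.mem_Ico] at hr1 hcm1
      obtain ⟨-, -, -, -, -, f4⟩ := T.cE_pos_facts hcm2
      exact ⟨by omega, by omega, c, hcm1.1, f4, hcm2⟩
    rw [Finset.mem_Ico] at hc₁m hr₁m
    by_cases hE : rowsE.Nonempty
    · by_cases hB : rowsB.Nonempty
      · rcases le_or_gt (rowsB.max' hB) (rowsE.max' hE) with hle | hlt
        · -- edge dominant
          obtain ⟨f1, f2, f3⟩ := hEfacts _ (rowsE.max'_mem hE)
          refine T.case_edge hlr hk j hj hjW IH (rowsE.max' hE) f1 f2 f3 ?_ ?_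
          · intro r c hjc hgt
            by_contra hne
            have := rowsB.le_max' r (hmemB hjc hne)
            omega
          · intro r c hjc hgt
            by_contra hne
            have := rowsE.le_max' r (hmemE hjc hne)
            omega
        · -- box dominant
          obtain ⟨f1, f2, f3⟩ := hBfacts _ (rowsB.max'_mem hB)
          refine T.case_box hlr hk j hj hjW IH (rowsB.max' hB) f1 f2 f3 ?_ ?_
          · intro r c hjc hgt
            by_contra hne
            have := rowsB.le_max' r (hmemB hjc hne)
            omega
          · intro r c hjc hge
            by_contra hne
            have := rowsE.le_max' r (hmemE hjc hne)
            omega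
      · -- only edges
        obtain ⟨f1, f2, f3⟩ := hEfacts _ (rowsE.max'_mem hE)
        refine T.case_edge hlr hk j hj hjW IH (rowsE.max' hE) f1 f2 f3 ?_ ?_
        · intro r c hjc hgt
          by_contra hne
          exact hB ⟨r, hmemB hjc hne⟩
        · intro r c hjc hgt
          by_contra hne
          have := rowsE.le_max' r (hmemE hjc hne)
          omega
    · -- only boxes
      have hB : rowsB.Nonempty := by
        by_contra hB
        have : T.cB (k+1) r₁ c₁ = 0 := by
          by_contra hne
          exact hB ⟨r₁, hmemB hc₁m.1 hne⟩
        have : T.cE (k+1) r₁ c₁ ≠ 0 := by omega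
        exact hE ⟨r₁, hmemE hc₁m.1 this⟩
      obtain ⟨f1, f2, f3⟩ := hBfacts _ (rowsB.max'_mem hB)
      refine T.case_box hlr hk j hj hjW IH (rowsB.max' hB) f1 f2 f3 ?_ ?_
      · intro r c hjc hgt
        by_contra hne
        have := rowsB.le_max' r (hmemB hjc hne)
        omega
      · intro r c hjc hge
        by_contra hne
        exact hE ⟨r, hmemE hjc hne⟩


/-! ### From `star` to the column lattice word -/

theorem colCnt_eq_zero {m c : ℕ} (h : nu.part 1 < c) : T.colCnt m c = 0 :=
  Finset.sum_eq_zero fun r _ => by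
    have hB : T.cB m r c = 0 := by
      by_contra hne
      obtain ⟨-, -, -, -, -, f4⟩ := T.cB_pos_facts hne
      omega
    have hE : T.cE m r c = 0 := by
      by_contra hne
      obtain ⟨-, -, -, -, -, f4⟩ := T.cE_pos_facts hne
      omega
    omega

theorem mem_boxWord {x r c : ℕ} (h : x ∈ T.boxWord r c) :
    IsBox lam nu r c ∧ T.box r c = x := by
  unfold boxWord at h
  by_cases hb : IsBox lam nu r c
  · rw [if_pos hb] at h
    simp at h
    exact ⟨hb, h.symm⟩
  · rw [if_neg hb] at h
    simp at h

theorem mem_edgeWord {x r c : ℕ} (h : x ∈ T.edgeWord r c) : x ∈ T.edge r c :=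
  (Finset.mem_sort _).mp h

theorem pairwise_flatMap_range {f : ℕ → List ℕ} {n : ℕ}
    (hblock : ∀ i, i < n → (f i).Pairwise (· < ·))
    (hcross : ∀ i i', i < i' → i' < n → ∀ x ∈ f i, ∀ y ∈ f i', x < y) :
    ((List.range n).flatMap f).Pairwise (· < ·) := by
  induction n with
  | zero => simp
  | succ n ih =>
    rw [List.range_succ, List.flatMap_append]
    rw [List.pairwise_append]
    refine ⟨ih (fun i hi => hblock i (by omega))
      (fun i i' h1 h2 => hcross i i' h1 (by omega)), ?_, ?_⟩
    · simp only [List.flatMap_cons, List.flatMap_nil, List.append_nil]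
      exact hblock n (by omega)
    · intro x hx y hy
      simp only [List.flatMap_cons, List.flatMap_nil, List.append_nil] at hy
      obtain ⟨i, hi, hxi⟩ := List.mem_flatMap.mp hx
      exact hcross i n (List.mem_range.mp hi) (by omega) x hxi y hy

theorem colW_pairwise (c : ℕ) : (T.colW c).Pairwise (· < ·) := by
  unfold colW
  apply pairwise_flatMap_range
  · intro i _
    rw [List.pairwise_append]
    refine ⟨?_, ?_, ?_⟩
    · unfold boxWord
      split <;> simp
    · exact List.sortedLT_iff_pairwise.mp (Finset.sortedLT_sort _)
    · intro x hx y hy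
      obtain ⟨hbx, hbv⟩ := T.mem_boxWord hx
      have := T.edge_gt_box (i+1) c hbx y (T.mem_edgeWord hy)
      omega
  · intro i i' h1 _ x hx y hy
    rcases List.mem_append.mp hx with hx | hx <;> rcases List.mem_append.mp hy with hy | hy
    · obtain ⟨hbx, hbv⟩ := T.mem_boxWord hx
      obtain ⟨hby, hbv'⟩ := T.mem_boxWord hy
      have := T.co_bb hbx hby (by omega)
      omega
    · obtain ⟨hbx, hbv⟩ := T.mem_boxWord hx
      have hy' := T.mem_edgeWord hy
      have := T.co_be hbx (T.isEdge_of_mem hy') hy' (by omega)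
      omega
    · have hx' := T.mem_edgeWord hx
      obtain ⟨hby, hbv'⟩ := T.mem_boxWord hy
      have := T.co_eb (T.isEdge_of_mem hx') hx' hby (by omega)
      omega
    · have hx' := T.mem_edgeWord hx
      have hy' := T.mem_edgeWord hy
      have := T.co_ee (T.isEdge_of_mem hx') hx' (T.isEdge_of_mem hy') hy' (by omega)
      omega

theorem mem_take_of_sorted {l : List ℕ} (hl : l.Pairwise (· < ·)) {a b t : ℕ}
    (hab : a < b) (ha : a ∈ l) (hb : b ∈ l.take t) : a ∈ l.take t := by
  by_contra hna
  have hsplit := List.take_append_drop t l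
  have hp : (l.take t ++ l.drop t).Pairwise (· < ·) := by rw [hsplit]; exact hl
  rw [List.pairwise_append] at hp
  have hadrop : a ∈ l.drop t := by
    have : a ∈ l.take t ++ l.drop t := by rw [hsplit]; exact ha
    rcases List.mem_append.mp this with h | h
    · exact absurd h hna
    · exact h
  have := hp.2.2 b hb a hadrop
  omega

theorem V_rec (m c : ℕ) : T.V m (c+1) = T.colCnt m (c+1) + T.V m (c+2) := by
  by_cases h : c + 1 ≤ nu.part 1
  · unfold V
    rw [Finset.sum_eq_sum_Ico_succ_bot (by omega)]
  · rw [T.V_eq_zero (by omega), T.V_eq_zero (by omega), T.colCnt_eq_zero (by omega)]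

theorem wcTail_lattice {k : ℕ} (hk : 1 ≤ k)
    (hstar : ∀ j, 1 ≤ j → T.V (k+1) j ≤ T.V k j) :
    ∀ cmax t, T.V (k+1) (cmax+1)
        + ((((List.range cmax).reverse).flatMap (fun j0 => T.colW (j0+1))).take t).count (k+1)
      ≤ T.V k (cmax+1)
        + ((((List.range cmax).reverse).flatMap (fun j0 => T.colW (j0+1))).take t).count k := by
  intro cmax
  induction cmax with
  | zero =>
    intro t
    simp only [List.range_zero, List.reverse_nil, List.flatMap_nil, List.take_nil,
      List.count_nil]
    exact Nat.add_le_add (hstar 1 (le_refl _)) (le_refl 0)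
  | succ c ih =>
    intro t
    simp only [show c + 1 + 1 = c + 2 from rfl]
    have hrev : (List.range (c+1)).reverse = c :: (List.range c).reverse := by
      rw [List.range_succ, List.reverse_append]
      rfl
    rw [hrev, List.flatMap_cons, List.take_append, List.count_append,
      List.count_append]
    set A := (T.colW (c+1)).take t with hA
    set B := (((List.range c).reverse).flatMap (fun j0 => T.colW (j0+1))).take
      (t - (T.colW (c+1)).length) with hB
    have hVr1 := T.V_rec (k+1) c
    have hVr2 := T.V_rec k c
    by_cases ht : t ≤ (T.colW (c+1)).length
    · have hB0 : B = [] := by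
        rw [hB, Nat.sub_eq_zero_of_le ht, List.take_zero]
      rw [hB0]
      simp only [List.count_nil]
      have hAcount : ∀ m, A.count m ≤ T.colCnt m (c+1) := fun m => by
        rw [← T.count_colW m (c+1)]
        exact (List.take_sublist t _).count_le m
      by_cases hmem : (k+1) ∈ A
      · by_cases hkmem : k ∈ T.colW (c+1)
        · have hkA : k ∈ A := by
            rw [hA]
            refine mem_take_of_sorted (T.colW_pairwise (c+1)) (show k < k + 1 by omega) hkmem ?_
            rw [hA] at hmem
            exact hmem
          have h1 : 1 ≤ A.count k := by
            by_contra hcon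
            have : A.count k = 0 := by omega
            rw [List.count_eq_zero] at this
            exact this hkA
          have h2 : A.count (k+1) ≤ 1 :=
            le_trans (hAcount (k+1)) (T.colCnt_le_one (k+1) (c+1))
          have := hstar (c+2) (by omega)
          omega
        · have hck : T.colCnt k (c+1) = 0 := by
            rw [← T.count_colW k (c+1), List.count_eq_zero]
            exact hkmem
          have h2 := hAcount (k+1)
          have := hstar (c+1) (by omega)
          omega
      · have h0 : A.count (k+1) = 0 := by
          rw [List.count_eq_zero]
          exact hmem
        have := hstar (c+2) (by omega)
        omega
    · have hA' : A = T.colW (c+1) := by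
        rw [hA, List.take_of_length_le (by omega)]
      have hAc : ∀ m, A.count m = T.colCnt m (c+1) := fun m => by
        rw [hA', T.count_colW]
      have hih := ih (t - (T.colW (c+1)).length)
      rw [← hB] at hih
      rw [hAc, hAc]
      omega

end EdgeTableau

theorem col_lattice_of_row_lattice' (lam mu nu : Partition')
    (T : EdgeTableau lam mu nu) (h : IsLatticeWord T.wr) :
    IsLatticeWord T.wc := by
  intro k hk t
  have hstar := T.star h hk
  have hmain := T.wcTail_lattice hk hstar (nu.part 1) t
  rw [T.V_eq_zero (by omega), T.V_eq_zero (by omega)] at hmain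
  have hwc : T.wc = ((List.range (nu.part 1)).reverse).flatMap (fun j0 => T.colW (j0+1)) :=
    T.wc_eq
  rw [hwc]
  omega

end AUX

/-- If the row reading word of an edge-labeled tableau is lattice, then so is
its column reading word. -/
theorem col_lattice_of_row_lattice (lam mu nu : Partition')
    (T : EdgeTableau lam mu nu) (h : IsLatticeWord T.wr) :
    IsLatticeWord T.wc :=
  col_lattice_of_row_lattice' lam mu nu T h
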